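/- Nonnegativity in the anisotropic conformable Picone identity: let α ∈ (0,1], let Ω ⊆ (0,∞)^n be open, let p_k > 1 for k = 1,…,n, and let u, v : Ω → ℝ be differentiable with u ≥ 0 and v > 0 on Ω. Then L(u,v)(x) ≥ 0 for every x ∈ Ω. -/

import Mathlib

open Filter Topology

/-- The conformable partial derivative of order `α` in the `k`-th coordinate:
`D^α_{x_k} f (x) = x_k^{1-α} ∂f/∂x_k (x)`. -/
noncomputable def confPDeriv (α : ℝ) {n : ℕ} (f : (Fin n → ℝ) → ℝ) (k : Fin n)
    (x : Fin n → ℝ) : ℝ :=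
  (x k) ^ (1 - α) * deriv (fun t : ℝ => f (Function.update x k t)) (x k)

/-- The second form `L(u,v)` of the anisotropic conformable Picone identity. -/
noncomputable def piconeL (α : ℝ) {n : ℕ} (p : Fin n → ℝ)
    (u v : (Fin n → ℝ) → ℝ) (x : Fin n → ℝ) : ℝ :=
  (∑ k, |confPDeriv α u k x| ^ (p k))
    + (∑ k, (p k - 1) * (u x / v x) ^ (p k) * |confPDeriv α v k x| ^ (p k))
    - ∑ k, p k * (u x / v x) ^ (p k - 1) * |confPDeriv α v k x| ^ (p k - 2)
        * confPDeriv α u k x * confPDeriv α v k x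

/-! With `t = u/v`, `a = D^α u`, `b = D^α v` and `q = p_k`, the `k`-th summand of `L(u,v)` is
`|a|^q + (q-1)(t|b|)^q - q t^{q-1} |b|^{q-2} a b`. Since `|b|^{q-2} a b ≤ |a| |b|^{q-1}`, it is
bounded below by `|a|^q + (q-1) y^q - q |a| y^{q-1}` with `y = t|b|`, which is nonnegative by
Young's inequality for the conjugate exponents `q` and `q/(q-1)`. -/

theorem Real.mul_mul_rpow_sub_one_le {q x y : ℝ} (hq : 1 < q) (hx : 0 ≤ x) (hy : 0 ≤ y) :
    q * (x * y ^ (q - 1)) ≤ x ^ q + (q - 1) * y ^ q := by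
  have hq0 : 0 < q := by linarith
  have hq1 : 0 < q - 1 := by linarith
  have hpow : (y ^ (q - 1)) ^ q.conjExponent = y ^ q := by
    rw [← Real.rpow_mul hy, Real.conjExponent, mul_div_cancel₀ _ hq1.ne']
  have hyoung := Real.young_inequality_of_nonneg hx (Real.rpow_nonneg hy (q - 1))
    (Real.HolderConjugate.conjExponent hq)
  rw [hpow, Real.conjExponent] at hyoung
  calc q * (x * y ^ (q - 1)) ≤ q * (x ^ q / q + y ^ q / (q / (q - 1))) := by gcongr
    _ = x ^ q + (q - 1) * y ^ q := by field_simp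

theorem abs_rpow_sub_two_mul_mul_le {q : ℝ} (hq : 1 < q) (a b : ℝ) :
    |b| ^ (q - 2) * a * b ≤ |a| * |b| ^ (q - 1) := by
  rcases eq_or_ne b 0 with rfl | hb
  · simp [Real.zero_rpow (by linarith : q - 1 ≠ 0)]
  · have hb0 : 0 < |b| := abs_pos.mpr hb
    calc |b| ^ (q - 2) * a * b ≤ |b| ^ (q - 2) * (|a| * |b|) := by
          rw [mul_assoc, ← abs_mul]
          exact mul_le_mul_of_nonneg_left (le_abs_self _) (by positivity)
      _ = |a| * |b| ^ (q - 1) := by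
          rw [show q - 1 = q - 2 + 1 by ring, Real.rpow_add_one hb0.ne']
          ring

theorem picone_summand_nonneg {q t : ℝ} (hq : 1 < q) (ht : 0 ≤ t) (a b : ℝ) :
    0 ≤ |a| ^ q + (q - 1) * t ^ q * |b| ^ q - q * t ^ (q - 1) * |b| ^ (q - 2) * a * b := by
  have hyoung := Real.mul_mul_rpow_sub_one_le hq (abs_nonneg a) (mul_nonneg ht (abs_nonneg b))
  rw [Real.mul_rpow ht (abs_nonneg b), Real.mul_rpow ht (abs_nonneg b)] at hyoung
  have hcross := mul_le_mul_of_nonneg_left (abs_rpow_sub_two_mul_mul_le hq a b)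
    (by positivity : 0 ≤ q * t ^ (q - 1))
  linarith

theorem anisotropic_conformable_picone_nonneg_general (α : ℝ)
    (n : ℕ) (Ω : Set (Fin n → ℝ))
    (p : Fin n → ℝ) (hp : ∀ k, 1 < p k)
    (u v : (Fin n → ℝ) → ℝ)
    (hu0 : ∀ x ∈ Ω, 0 ≤ u x) (hv0 : ∀ x ∈ Ω, 0 < v x) :
    ∀ x ∈ Ω, 0 ≤ piconeL α p u v x := by
  intro x hx
  have ht : 0 ≤ u x / v x := div_nonneg (hu0 x hx) (hv0 x hx).le
  rw [piconeL, ← Finset.sum_add_distrib, ← Finset.sum_sub_distrib]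
  exact Finset.sum_nonneg fun k _ => picone_summand_nonneg (hp k) ht _ _

/-- Nonnegativity in the anisotropic conformable Picone identity: `L(u,v) ≥ 0`. -/
theorem anisotropic_conformable_picone_nonneg (α : ℝ) (hα : α ∈ Set.Ioc (0 : ℝ) 1)
    (n : ℕ) (Ω : Set (Fin n → ℝ)) (hΩ : IsOpen Ω)
    (hΩpos : Ω ⊆ {x : Fin n → ℝ | ∀ k, 0 < x k})
    (p : Fin n → ℝ) (hp : ∀ k, 1 < p k)
    (u v : (Fin n → ℝ) → ℝ)
    (hu : DifferentiableOn ℝ u Ω) (hv : DifferentiableOn ℝ v Ω)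
    (hu0 : ∀ x ∈ Ω, 0 ≤ u x) (hv0 : ∀ x ∈ Ω, 0 < v x) :
    ∀ x ∈ Ω, 0 ≤ piconeL α p u v x :=
  anisotropic_conformable_picone_nonneg_general α n Ω p hp u v hu0 hv0
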